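/- arXiv:1408.3661 — 6 statements merged into one kernel-verified Lean document; each statement's English description precedes it below -/
import Mathlib

section
/- For any probability vector (p_1,...,p_L) with p_i > 0 summing to 1, the quantity sum_{i=1}^{L-1} (p_i + p_{i+1}) * h2(p_i/(p_i+p_{i+1})) is at most 2, where h2 is the binary entropy function. -/
/-- The binary entropy function (base 2). -/
noncomputable def h2 (x : ℝ) : ℝ := -(x * Real.logb 2 x) - (1 - x) * Real.logb 2 (1 - x)

/-! Each term is at most `p i + p (i + 1)` since `h2 ≤ 1`, and every `p i` occurs in at most two
consecutive pairs. -/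

lemma h2_eq_binEntropy_div_log_two (x : ℝ) : h2 x = Real.binEntropy x / Real.log 2 := by
  unfold h2 Real.binEntropy Real.logb
  rw [Real.log_inv, Real.log_inv]
  ring

lemma h2_le_one (x : ℝ) : h2 x ≤ 1 := by
  rw [h2_eq_binEntropy_div_log_two, div_le_one (Real.log_pos one_lt_two)]
  exact Real.binEntropy_le_log_two

lemma Finset.sum_range_pred_add_succ_le_two_nsmul {M : Type*} [AddCommMonoid M] [PartialOrder M]
    [IsOrderedAddMonoid M] (n : ℕ) (f : ℕ → M) (hf : ∀ i < n, 0 ≤ f i) :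
    ∑ i ∈ range (n - 1), (f i + f (i + 1)) ≤ 2 • ∑ i ∈ range n, f i := by
  cases n with
  | zero => simp
  | succ m =>
    rw [Nat.add_sub_cancel, sum_add_distrib, two_nsmul]
    refine add_le_add ?_ ?_
    · rw [sum_range_succ]
      exact le_add_of_nonneg_right (hf m m.lt_succ_self)
    · rw [sum_range_succ' f]
      exact le_add_of_nonneg_right (hf 0 m.succ_pos)

/-- For any probability vector `(p_0, …, p_{L-1})` with positive entries summing to one,
`∑_{i=0}^{L-2} (p_i + p_{i+1}) h2(p_i/(p_i+p_{i+1})) ≤ 2`. -/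
theorem sum_pair_binEntropy_le_two (L : ℕ) (p : ℕ → ℝ)
    (hpos : ∀ i < L, 0 < p i)
    (hsum : ∑ i ∈ Finset.range L, p i = 1) :
    ∑ i ∈ Finset.range (L - 1), (p i + p (i + 1)) * h2 (p i / (p i + p (i + 1))) ≤ 2 := by
  calc ∑ i ∈ Finset.range (L - 1), (p i + p (i + 1)) * h2 (p i / (p i + p (i + 1)))
      ≤ ∑ i ∈ Finset.range (L - 1), (p i + p (i + 1)) := by
        refine Finset.sum_le_sum fun i hi => mul_le_of_le_one_right ?_ (h2_le_one _)
        have hi : i < L - 1 := Finset.mem_range.mp hi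
        exact add_nonneg (hpos i (by omega)).le (hpos (i + 1) (by omega)).le
    _ ≤ 2 • ∑ i ∈ Finset.range L, p i :=
        Finset.sum_range_pred_add_succ_le_two_nsmul L p fun i hi => (hpos i hi).le
    _ = 2 := by rw [hsum, two_nsmul, one_add_one_eq_two]
end

section
/- If f: X^N -> {1,...,N} is a candidate argmax function (i.e., f(x) is always an index attaining the maximum coordinate of x), then for every user index i and for any three distinct values alpha < gamma < beta in X, there exists an input assignment of the other coordinates such that f differs when coordinate i equals alpha versus beta; consequently no three vertices can form an independent set in the characteristic graph of any user. -/
/-! Fix every other coordinate at `g`. With coordinate `i` equal to `b`, user `i` holds the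
unique maximum, so `f` must return `i`; with coordinate `i` equal to `a`, any other user
(there is one since `N ≥ 2`) beats user `i`, so `f` cannot return `i`. -/

/-- `f` is a candidate argmax function: `f x` is always an index attaining the
maximum coordinate of `x`. -/
def IsArgmaxFun {N L : ℕ} (f : (Fin N → Fin L) → Fin N) : Prop :=
  ∀ x : Fin N → Fin L, ∀ j : Fin N, x j ≤ x (f x)

namespace IsArgmaxFun

variable {N L : ℕ} {f : (Fin N → Fin L) → Fin N}

theorem apply_eq_of_forall_lt (hf : IsArgmaxFun f) {x : Fin N → Fin L} {i : Fin N}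
    (hx : ∀ j ≠ i, x j < x i) : f x = i := by
  by_contra hne
  exact (hf x i).not_gt (hx _ hne)

theorem apply_ne_of_lt (hf : IsArgmaxFun f) {x : Fin N → Fin L} {i j : Fin N}
    (hij : x i < x j) : f x ≠ i := by
  rintro hfi
  exact (hij.trans_le (hfi ▸ hf x j)).false

end IsArgmaxFun

/-- For a candidate argmax function, any user `i`, and any three values `a < g < b`,
there exists an assignment of the other coordinates on which `f` differs when
coordinate `i` equals `a` versus `b`; hence no three vertices form an independent set
in the characteristic graph of user `i`. -/
theorem no_three_independent {N L : ℕ} (hN : 2 ≤ N)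
    (f : (Fin N → Fin L) → Fin N) (hf : IsArgmaxFun f)
    (i : Fin N) (a g b : Fin L) (hag : a < g) (hgb : g < b) :
    ∃ y : Fin N → Fin L,
      f (Function.update y i a) ≠ f (Function.update y i b) := by
  refine ⟨fun _ => g, ?_⟩
  have hb : f (Function.update (fun _ => g) i b) = i :=
    hf.apply_eq_of_forall_lt fun j hj => by simpa [hj] using hgb
  obtain ⟨j, hj⟩ : ∃ j : Fin N, j ≠ i :=
    Fintype.exists_ne_of_one_lt_card (by simpa using hN.trans_lt' one_lt_two) i
  have ha : f (Function.update (fun _ => g) i a) ≠ i :=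
    hf.apply_ne_of_lt (j := j) (by simpa [hj] using hag)
  rwa [hb]
end

section
/- Let N users each take values in {alpha_1,...,alpha_L} with min alpha_1 > 0. Any function f: X^N -> X achieving zero expected distortion under the max-distortion measure must equal the max function exactly, and consequently the characteristic graph of every user with respect to f is the complete graph on L vertices. -/
/-- Adjacency in the characteristic graph of user `n` for an `X`-valued function. -/
def CharAdjV {N L : ℕ} (f : (Fin N → Fin L) → Fin L) (n : Fin N) (a b : Fin L) : Prop :=
  a ≠ b ∧ ∃ y : Fin N → Fin L, f (Function.update y n a) ≠ f (Function.update y n b)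

/-!
Every summand of the expected distortion is a positive probability times a nonnegative
distortion, so zero expected distortion forces zero distortion on every input. Since all
values are positive, overshooting the maximum costs the maximum itself, which is nonzero;
hence `f` must hit the maximum exactly. Finally, the max function separates any two values
`a ≠ b` of one user once all other users sit at the bottom value.
-/

/-- The max-distortion `d_M` between the true maximum `m` and an estimate `z`. -/
noncomputable def maxDistortion (m z : ℝ) : ℝ :=
  if z ≤ m then m - z else m

lemma maxDistortion_nonneg {m : ℝ} (hm : 0 ≤ m) (z : ℝ) : 0 ≤ maxDistortion m z := by
  unfold maxDistortion
  split_ifs with h <;> linarith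

lemma maxDistortion_eq_zero_iff {m : ℝ} (hm : 0 < m) {z : ℝ} : maxDistortion m z = 0 ↔ z = m := by
  unfold maxDistortion
  split_ifs with h
  · constructor <;> intro <;> linarith
  · constructor
    · intro h0; linarith
    · intro hz; exact absurd hz.le h

lemma Fintype.eq_zero_of_sum_mul_eq_zero {ι R : Type*} [Fintype ι] [Semiring R] [PartialOrder R]
    [IsOrderedRing R] [NoZeroDivisors R] {w g : ι → R} (hw : ∀ i, 0 < w i) (hg : ∀ i, 0 ≤ g i)
    (hsum : ∑ i, w i * g i = 0) (i : ι) : g i = 0 := by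
  have hterm := (Finset.sum_eq_zero_iff_of_nonneg fun j _ => mul_nonneg (hw j).le (hg j)).1
    hsum i (Finset.mem_univ i)
  exact (mul_eq_zero.1 hterm).resolve_left (hw i).ne'

lemma Finset.sup'_univ_update_bot {ι β : Type*} [Fintype ι] [Nonempty ι] [DecidableEq ι]
    [SemilatticeSup β] [OrderBot β] (i : ι) (c : β) :
    Finset.univ.sup' Finset.univ_nonempty (Function.update (fun _ => ⊥) i c) = c := by
  refine le_antisymm (Finset.sup'_le _ _ fun j _ => ?_) ?_
  · rcases eq_or_ne j i with rfl | hne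
    · simp
    · simp [Function.update_of_ne hne]
  · simpa using Finset.le_sup' (Function.update (fun _ => (⊥ : β)) i c) (Finset.mem_univ i)

lemma charAdjV_sup' {N L : ℕ} (n : Fin (N + 1)) {a b : Fin (L + 1)} (hab : a ≠ b) :
    CharAdjV (fun x => Finset.univ.sup' Finset.univ_nonempty x) n a b :=
  ⟨hab, fun _ => ⊥, by simpa only [Finset.sup'_univ_update_bot] using hab⟩

theorem max_zero_distortion_complete_general (N L : ℕ) (α : Fin (L + 1) → ℝ)
    (hmono : StrictMono α) (hpos : 0 < α 0)
    (p : Fin (L + 1) → ℝ) (hp : ∀ i, 0 < p i)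
    (f : (Fin (N + 1) → Fin (L + 1)) → Fin (L + 1))
    (hzero : ∑ x : Fin (N + 1) → Fin (L + 1), (∏ i, p (x i)) *
        (if α (f x) ≤ α (Finset.univ.sup' Finset.univ_nonempty x)
          then α (Finset.univ.sup' Finset.univ_nonempty x) - α (f x)
          else α (Finset.univ.sup' Finset.univ_nonempty x)) = 0) :
    (∀ x : Fin (N + 1) → Fin (L + 1), f x = Finset.univ.sup' Finset.univ_nonempty x) ∧
    (∀ n : Fin (N + 1), ∀ a b : Fin (L + 1), a ≠ b → CharAdjV f n a b) := by
  have hα : ∀ i, 0 < α i := fun i => hpos.trans_le (hmono.monotone (Fin.zero_le i))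
  have hf : ∀ x, f x = Finset.univ.sup' Finset.univ_nonempty x := fun x =>
    hmono.injective <| (maxDistortion_eq_zero_iff (hα _)).1 <|
      Fintype.eq_zero_of_sum_mul_eq_zero (fun y => Finset.prod_pos fun i _ => hp (y i))
        (fun y => maxDistortion_nonneg (hα _).le _) hzero x
  obtain rfl : f = fun x => Finset.univ.sup' Finset.univ_nonempty x := funext hf
  exact ⟨hf, fun n _ _ hab => charAdjV_sup' n hab⟩

/-- With `N+1` users taking values `α 0 < … < α L` with `α 0 > 0` and a full-support
product distribution, any function achieving zero expected distortion under the
max-distortion measure equals the max function exactly, and consequently every user's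
characteristic graph is complete. -/
theorem max_zero_distortion_complete (N L : ℕ) (α : Fin (L + 1) → ℝ)
    (hmono : StrictMono α) (hpos : 0 < α 0)
    (p : Fin (L + 1) → ℝ) (hp : ∀ i, 0 < p i) (hsum : ∑ i, p i = 1)
    (f : (Fin (N + 1) → Fin (L + 1)) → Fin (L + 1))
    (hzero : ∑ x : Fin (N + 1) → Fin (L + 1), (∏ i, p (x i)) *
        (if α (f x) ≤ α (Finset.univ.sup' Finset.univ_nonempty x)
          then α (Finset.univ.sup' Finset.univ_nonempty x) - α (f x)
          else α (Finset.univ.sup' Finset.univ_nonempty x)) = 0) :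
    (∀ x : Fin (N + 1) → Fin (L + 1), f x = Finset.univ.sup' Finset.univ_nonempty x) ∧
    (∀ n : Fin (N + 1), ∀ a b : Fin (L + 1), a ≠ b → CharAdjV f n a b) :=
  max_zero_distortion_complete_general N L α hmono hpos p hp f hzero
end

section
/- With the same setup, for N users the partial derivative of E[X_{Z_hat}] with respect to the interior decision boundary l_k equals f(l_k) * [ (F_{k+1}^N - F_k^N)(E_{k+1} - l_k)/p_{k+1} + (F_k^N - F_{k-1}^N)(l_k - E_k)/p_k - N F_k^{N-1} (E_{k+1} - E_k) ], where F_j = F(l_j), p_j = F_j - F_{j-1}, and E_j = E[X | l_{j-1} <= X <= l_j]. -/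
/-- Conditional mean `E[X | a ≤ X ≤ b]` for a source with density `fpdf` and CDF `F`. -/
noncomputable def condMean (fpdf F : ℝ → ℝ) (a b : ℝ) : ℝ :=
  (∫ x in a..b, x * fpdf x) / (F b - F a)

/-!
Only the two cells adjacent to `ℓ k` depend on the boundary. Moving the boundary changes each of
their conditional means by `f(ℓ_k) (E - ℓ_k) / p` (quotient rule, with the fundamental theorem of
calculus for the numerator) and their selection probabilities `F_j^N - F_{j-1}^N` by
`± N F_k^{N-1} f(ℓ_k)`; the product rule then gives the formula.
-/

open Finset

section CondMean

variable {fpdf F : ℝ → ℝ} {a b c : ℝ}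

theorem hasDerivAt_condMean_right (hF : HasDerivAt F (fpdf b) b) (hf : Continuous fpdf)
    (hab : F b ≠ F a) :
    HasDerivAt (fun t => condMean fpdf F a t)
      (fpdf b * (b - condMean fpdf F a b) / (F b - F a)) b := by
  have hcont : Continuous fun x => x * fpdf x := continuous_id.mul hf
  have hI : HasDerivAt (fun t => ∫ x in a..t, x * fpdf x) (b * fpdf b) b :=
    intervalIntegral.integral_hasDerivAt_right (hcont.intervalIntegrable _ _)
      hcont.stronglyMeasurable.stronglyMeasurableAtFilter hcont.continuousAt
  have hden : F b - F a ≠ 0 := sub_ne_zero.mpr hab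
  refine (hI.div (hF.sub_const (F a)) hden).congr_deriv ?_
  unfold condMean
  field_simp

theorem hasDerivAt_condMean_left (hF : HasDerivAt F (fpdf b) b) (hf : Continuous fpdf)
    (hbc : F c ≠ F b) :
    HasDerivAt (fun t => condMean fpdf F t c)
      (fpdf b * (condMean fpdf F b c - b) / (F c - F b)) b := by
  have hcont : Continuous fun x => x * fpdf x := continuous_id.mul hf
  have hJ : HasDerivAt (fun t => ∫ x in t..c, x * fpdf x) (-(b * fpdf b)) b :=
    intervalIntegral.integral_hasDerivAt_left (hcont.intervalIntegrable _ _)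
      hcont.stronglyMeasurable.stronglyMeasurableAtFilter hcont.continuousAt
  have hden : F c - F b ≠ 0 := sub_ne_zero.mpr hbc
  refine (hJ.div (hF.const_sub (F c)) hden).congr_deriv ?_
  unfold condMean
  field_simp
  ring

end CondMean

theorem sum_Icc_ite_adjacent {α β : Type*} [AddCommMonoid β] (g : α → α → β) (ℓ : ℕ → α)
    (t : α) {K k : ℕ} (hk1 : 1 ≤ k) (hkK : k < K) :
    ∑ j ∈ Icc 1 K, g (if j - 1 = k then t else ℓ (j - 1)) (if j = k then t else ℓ j) =
      g (ℓ (k - 1)) t + g t (ℓ (k + 1)) +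
        ∑ j ∈ ((Icc 1 K).erase k).erase (k + 1), g (ℓ (j - 1)) (ℓ j) := by
  have hk : k ∈ Icc 1 K := mem_Icc.mpr ⟨hk1, hkK.le⟩
  have hk' : k + 1 ∈ (Icc 1 K).erase k := mem_erase.mpr ⟨by omega, mem_Icc.mpr ⟨by omega, hkK⟩⟩
  rw [← add_sum_erase _ _ hk, ← add_sum_erase _ _ hk', ← add_assoc]
  have hrest : ∀ j ∈ ((Icc 1 K).erase k).erase (k + 1),
      g (if j - 1 = k then t else ℓ (j - 1)) (if j = k then t else ℓ j) = g (ℓ (j - 1)) (ℓ j) := by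
    intro j hj
    simp only [mem_erase, mem_Icc] at hj
    rw [if_neg (by omega), if_neg hj.2.1]
  have hlow : k - 1 ≠ k := by omega
  have hhigh : k + 1 ≠ k := by omega
  simp only [sum_congr rfl hrest, Nat.add_sub_cancel, hlow, hhigh, if_true, if_false]

theorem deriv_expected_argmax_value_general
    (N K k : ℕ) (F fpdf : ℝ → ℝ) (ℓ : ℕ → ℝ)
    (hF : ∀ x, HasDerivAt F (fpdf x) x) (hfc : Continuous fpdf)
    (hpos : ∀ j, 1 ≤ j → j ≤ K → F (ℓ (j - 1)) < F (ℓ j))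
    (hk1 : 1 ≤ k) (hkK : k < K) :
    HasDerivAt
      (fun t => ∑ j ∈ Finset.Icc 1 K,
        ((∫ x in (if j - 1 = k then t else ℓ (j - 1))..(if j = k then t else ℓ j),
            x * fpdf x) /
          (F (if j = k then t else ℓ j) - F (if j - 1 = k then t else ℓ (j - 1)))) *
        ((F (if j = k then t else ℓ j)) ^ N -
          (F (if j - 1 = k then t else ℓ (j - 1))) ^ N))
      (fpdf (ℓ k) *
        (((F (ℓ (k + 1))) ^ N - (F (ℓ k)) ^ N) *
            (condMean fpdf F (ℓ k) (ℓ (k + 1)) - ℓ k) / (F (ℓ (k + 1)) - F (ℓ k)) +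
          ((F (ℓ k)) ^ N - (F (ℓ (k - 1))) ^ N) *
            (ℓ k - condMean fpdf F (ℓ (k - 1)) (ℓ k)) / (F (ℓ k) - F (ℓ (k - 1))) -
          (N : ℝ) * (F (ℓ k)) ^ (N - 1) *
            (condMean fpdf F (ℓ k) (ℓ (k + 1)) - condMean fpdf F (ℓ (k - 1)) (ℓ k))))
      (ℓ k) := by
  have hlow : F (ℓ k) ≠ F (ℓ (k - 1)) := (hpos k hk1 hkK.le).ne'
  have hhigh : F (ℓ (k + 1)) ≠ F (ℓ k) := (hpos (k + 1) (by omega) hkK).ne'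
  have hpow : HasDerivAt (fun t => F t ^ N) (N * F (ℓ k) ^ (N - 1) * fpdf (ℓ k)) (ℓ k) :=
    (hF (ℓ k)).pow N
  have hlowCell := (hasDerivAt_condMean_right (hF _) hfc hlow).mul
    (hpow.sub_const (F (ℓ (k - 1)) ^ N))
  have hhighCell := (hasDerivAt_condMean_left (hF _) hfc hhigh).mul
    (hpow.const_sub (F (ℓ (k + 1)) ^ N))
  have hcells := (hlowCell.add hhighCell).add_const
    (∑ j ∈ ((Icc 1 K).erase k).erase (k + 1),
      condMean fpdf F (ℓ (j - 1)) (ℓ j) * (F (ℓ j) ^ N - F (ℓ (j - 1)) ^ N))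
  refine (hcells.congr_deriv (by ring)).congr_of_eventuallyEq (.of_forall fun t => ?_)
  -- the summand of the statement is `condMean` unfolded
  exact sum_Icc_ite_adjacent (fun u v => condMean fpdf F u v * (F v ^ N - F u ^ N)) ℓ t hk1 hkK

/-- Derivative of the expected selected value `∑_j E_j (F_j^N − F_{j-1}^N)` of the
homogeneous scalar quantizer, with respect to an interior decision boundary `ℓ k`:
it equals
`f(ℓ_k) [ (F_{k+1}^N − F_k^N)(E_{k+1} − ℓ_k)/p_{k+1}
        + (F_k^N − F_{k-1}^N)(ℓ_k − E_k)/p_k − N F_k^{N-1}(E_{k+1} − E_k)]`. -/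
theorem deriv_expected_argmax_value
    (N K k : ℕ) (F fpdf : ℝ → ℝ) (ℓ : ℕ → ℝ)
    (hF : ∀ x, HasDerivAt F (fpdf x) x) (hfc : Continuous fpdf)
    (hmono : ∀ j < K, ℓ j < ℓ (j + 1))
    (hpos : ∀ j, 1 ≤ j → j ≤ K → F (ℓ (j - 1)) < F (ℓ j))
    (hk1 : 1 ≤ k) (hkK : k < K) :
    HasDerivAt
      (fun t => ∑ j ∈ Finset.Icc 1 K,
        ((∫ x in (if j - 1 = k then t else ℓ (j - 1))..(if j = k then t else ℓ j),
            x * fpdf x) /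
          (F (if j = k then t else ℓ j) - F (if j - 1 = k then t else ℓ (j - 1)))) *
        ((F (if j = k then t else ℓ j)) ^ N -
          (F (if j - 1 = k then t else ℓ (j - 1))) ^ N))
      (fpdf (ℓ k) *
        (((F (ℓ (k + 1))) ^ N - (F (ℓ k)) ^ N) *
            (condMean fpdf F (ℓ k) (ℓ (k + 1)) - ℓ k) / (F (ℓ (k + 1)) - F (ℓ k)) +
          ((F (ℓ k)) ^ N - (F (ℓ (k - 1))) ^ N) *
            (ℓ k - condMean fpdf F (ℓ (k - 1)) (ℓ k)) / (F (ℓ k) - F (ℓ (k - 1))) -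
          (N : ℝ) * (F (ℓ k)) ^ (N - 1) *
            (condMean fpdf F (ℓ k) (ℓ (k + 1)) - condMean fpdf F (ℓ (k - 1)) (ℓ k))))
      (ℓ k) :=
  deriv_expected_argmax_value_general N K k F fpdf ℓ hF hfc hpos hk1 hkK
end

section
/- For N = 2 i.i.d. sources with density f, the derivative of the expected estimated maximum with respect to the decision boundary l_k simplifies to f(l_k) * integral from l_{k-1} to l_{k+1} of (x - l_k) f(x) dx. -/
/-!
On a cell `[a, b]` with `F a ≠ F b` the contribution `E[X | a ≤ X ≤ b] (F b² − F a²)` simplifies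
to `(∫_a^b x f(x) dx) (F b + F a)`, which is differentiable in both endpoints by the fundamental
theorem of calculus. Moving `ℓ_k` only changes the two cells adjacent to it; adding their
derivatives, the terms `± ℓ_k f(ℓ_k) F(ℓ_k)` cancel and the rest collects into
`f(ℓ_k) ∫_{ℓ_{k-1}}^{ℓ_{k+1}} (x − ℓ_k) f(x) dx` once `∫ f = F(ℓ_{k+1}) − F(ℓ_{k-1})`.
-/

open intervalIntegral

/-- With `φ x = x f(x)` the first factor is `E[X | a ≤ X ≤ b]`. -/
noncomputable def cellContribution (F φ : ℝ → ℝ) (a b : ℝ) : ℝ :=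
  (∫ x in a..b, φ x) / (F b - F a) * (F b ^ 2 - F a ^ 2)

section CellContribution

variable {F φ : ℝ → ℝ} {a b x f' : ℝ}

theorem cellContribution_eq_of_ne (h : F a ≠ F b) :
    cellContribution F φ a b = (∫ y in a..b, φ y) * (F b + F a) := by
  have hne : F b - F a ≠ 0 := sub_ne_zero.mpr h.symm
  rw [cellContribution, div_mul_eq_mul_div, div_eq_iff hne]
  ring

theorem hasDerivAt_cellContribution_right (hF : HasDerivAt F f' x) (hφ : Continuous φ)
    (h : F a < F x) :
    HasDerivAt (fun t => cellContribution F φ a t)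
      (φ x * (F x + F a) + (∫ y in a..x, φ y) * f') x := by
  have hint : HasDerivAt (fun t => ∫ y in a..t, φ y) (φ x) x :=
    integral_hasDerivAt_right (hφ.intervalIntegrable _ _) (hφ.stronglyMeasurableAtFilter _ _)
      hφ.continuousAt
  refine (hint.mul (hF.add_const _)).congr_of_eventuallyEq ?_
  filter_upwards [hF.continuousAt.eventually (lt_mem_nhds h)] with t ht
  exact cellContribution_eq_of_ne ht.ne

theorem hasDerivAt_cellContribution_left (hF : HasDerivAt F f' x) (hφ : Continuous φ)
    (h : F x < F b) :
    HasDerivAt (fun t => cellContribution F φ t b)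
      (-φ x * (F b + F x) + (∫ y in x..b, φ y) * f') x := by
  have hint : HasDerivAt (fun t => ∫ y in t..b, φ y) (-φ x) x :=
    integral_hasDerivAt_left (hφ.intervalIntegrable _ _) (hφ.stronglyMeasurableAtFilter _ _)
      hφ.continuousAt
  refine (hint.mul (hF.const_add _)).congr_of_eventuallyEq ?_
  filter_upwards [hF.continuousAt.eventually (gt_mem_nhds h)] with t ht
  exact cellContribution_eq_of_ne ht.ne

end CellContribution

theorem hasDerivAt_cellContribution_add_cellContribution {F f : ℝ → ℝ} {a b x : ℝ}
    (hF : ∀ y, HasDerivAt F (f y) y) (hf : Continuous f) (ha : F a < F x) (hb : F x < F b) :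
    HasDerivAt
      (fun t => cellContribution F (fun y => y * f y) a t +
        cellContribution F (fun y => y * f y) t b)
      (f x * ∫ y in a..b, (y - x) * f y) x := by
  have hφ : Continuous fun y => y * f y := continuous_id.mul hf
  refine ((hasDerivAt_cellContribution_right (hF x) hφ ha).add
    (hasDerivAt_cellContribution_left (hF x) hφ hb)).congr_deriv ?_
  have hsplit : (∫ y in a..x, y * f y) + ∫ y in x..b, y * f y = ∫ y in a..b, y * f y :=
    integral_add_adjacent_intervals (hφ.intervalIntegrable _ _) (hφ.intervalIntegrable _ _)
  have hcdf : ∫ y in a..b, f y = F b - F a :=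
    integral_eq_sub_of_hasDerivAt (fun y _ => hF y) (hf.intervalIntegrable _ _)
  have hcentered : ∫ y in a..b, (y - x) * f y = (∫ y in a..b, y * f y) - x * (F b - F a) := by
    rw [← hcdf, ← integral_const_mul, ← integral_sub (hφ.intervalIntegrable _ _)
      ((hf.intervalIntegrable _ _).const_mul _)]
    simp only [sub_mul]
  rw [hcentered, ← hsplit]
  ring

theorem HasDerivAt.finset_sum_of_other_const {ι : Type*} [DecidableEq ι] {s : Finset ι}
    {g : ι → ℝ → ℝ} {i j : ι} {D x : ℝ} (hi : i ∈ s) (hj : j ∈ s) (hij : j ≠ i)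
    (hconst : ∀ m ∈ s, m ≠ i → m ≠ j → ∀ t, g m t = g m x)
    (h : HasDerivAt (fun t => g i t + g j t) D x) :
    HasDerivAt (fun t => ∑ m ∈ s, g m t) D x := by
  have hj' : j ∈ s.erase i := Finset.mem_erase.mpr ⟨hij, hj⟩
  have hsum : ∀ t, ∑ m ∈ s, g m t = g i t + g j t + ∑ m ∈ (s.erase i).erase j, g m x := by
    intro t
    rw [← Finset.add_sum_erase s _ hi, ← Finset.add_sum_erase _ _ hj', ← add_assoc]
    congr 1
    refine Finset.sum_congr rfl fun m hm => ?_
    obtain ⟨hmj, hm⟩ := Finset.mem_erase.mp hm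
    obtain ⟨hmi, hm⟩ := Finset.mem_erase.mp hm
    exact hconst m hm hmi hmj t
  simpa only [hsum] using h.add_const _

theorem deriv_expected_argmax_value_two_users_general
    (K k : ℕ) (F fpdf : ℝ → ℝ) (ℓ : ℕ → ℝ)
    (hF : ∀ x, HasDerivAt F (fpdf x) x) (hfc : Continuous fpdf)
    (hpos : ∀ j, 1 ≤ j → j ≤ K → F (ℓ (j - 1)) < F (ℓ j))
    (hk1 : 1 ≤ k) (hkK : k < K) :
    HasDerivAt
      (fun t => ∑ j ∈ Finset.Icc 1 K,
        ((∫ x in (if j - 1 = k then t else ℓ (j - 1))..(if j = k then t else ℓ j),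
            x * fpdf x) /
          (F (if j = k then t else ℓ j) - F (if j - 1 = k then t else ℓ (j - 1)))) *
        ((F (if j = k then t else ℓ j)) ^ 2 -
          (F (if j - 1 = k then t else ℓ (j - 1))) ^ 2))
      (fpdf (ℓ k) * ∫ x in (ℓ (k - 1))..(ℓ (k + 1)), (x - ℓ k) * fpdf x)
      (ℓ k) := by
  have hleft : F (ℓ (k - 1)) < F (ℓ k) := hpos k hk1 hkK.le
  have hright : F (ℓ k) < F (ℓ (k + 1)) := by simpa using hpos (k + 1) (by omega) hkK
  have hcells := hasDerivAt_cellContribution_add_cellContribution hF hfc hleft hright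
  have hpred : k - 1 ≠ k := by omega
  refine HasDerivAt.finset_sum_of_other_const (g := fun j t => cellContribution F (fun x => x * fpdf x)
      (if j - 1 = k then t else ℓ (j - 1)) (if j = k then t else ℓ j))
    (i := k) (j := k + 1) (Finset.mem_Icc.mpr ⟨hk1, hkK.le⟩)
    (Finset.mem_Icc.mpr ⟨by omega, hkK⟩) (by omega) ?_ (by simpa [hpred] using hcells)
  intro m _ hmk hmk1 t
  have hm1 : m - 1 ≠ k := by omega
  simp only [if_neg hmk, if_neg hm1]

/-- For `N = 2` i.i.d. sources with density `fpdf` and CDF `F`, the derivative of the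
expected estimated maximum `∑_j E_j (F_j² − F_{j-1}²)` with respect to the interior
decision boundary `ℓ k` equals `f(ℓ_k) ∫_{ℓ_{k-1}}^{ℓ_{k+1}} (x − ℓ_k) f(x) dx`. -/
theorem deriv_expected_argmax_value_two_users
    (K k : ℕ) (F fpdf : ℝ → ℝ) (ℓ : ℕ → ℝ)
    (hF : ∀ x, HasDerivAt F (fpdf x) x) (hfc : Continuous fpdf)
    (hmono : ∀ j < K, ℓ j < ℓ (j + 1))
    (hpos : ∀ j, 1 ≤ j → j ≤ K → F (ℓ (j - 1)) < F (ℓ j))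
    (hk1 : 1 ≤ k) (hkK : k < K) :
    HasDerivAt
      (fun t => ∑ j ∈ Finset.Icc 1 K,
        ((∫ x in (if j - 1 = k then t else ℓ (j - 1))..(if j = k then t else ℓ j),
            x * fpdf x) /
          (F (if j = k then t else ℓ j) - F (if j - 1 = k then t else ℓ (j - 1)))) *
        ((F (if j = k then t else ℓ j)) ^ 2 -
          (F (if j - 1 = k then t else ℓ (j - 1))) ^ 2))
      (fpdf (ℓ k) * ∫ x in (ℓ (k - 1))..(ℓ (k + 1)), (x - ℓ k) * fpdf x)
      (ℓ k) :=
  deriv_expected_argmax_value_two_users_general K k F fpdf ℓ hF hfc hpos hk1 hkK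
end

section
/- For the two-user argmax problem over a uniform discrete source of size L, the bisection-based interactive scheme has expected total communication R(L) satisfying R(L) <= 3 + (1/2) R(ceil(L/2)) with R(1) = 0, and therefore R(L) <= 6 - 6*(1/2)^{ceil(log2 L)} < 6 for all L >= 1. -/
/-!
Unrolling the recursion along `L, ⌈L/2⌉, ⌈L/4⌉, …`, which reaches `1` after exactly
`⌈log₂ L⌉` halvings, bounds `R L` by the geometric sum `3 ∑_{i < ⌈log₂ L⌉} (1/2)^i`,
and this equals `6 - 6 (1/2)^⌈log₂ L⌉`.
-/

open Finset

theorem Nat.clog_two_eq_clog_two_succ_div_two_add_one {L : ℕ} (hL : 2 ≤ L) :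
    Nat.clog 2 L = Nat.clog 2 ((L + 1) / 2) + 1 := by
  rw [Nat.clog_of_two_le one_lt_two hL]; rfl

theorem le_mul_geom_sum_clog_of_le_add_mul {R : ℕ → ℝ} {c p : ℝ} (hp : 0 ≤ p) (hone : R 1 ≤ 0)
    (hrec : ∀ L, 2 ≤ L → R L ≤ c + p * R ((L + 1) / 2)) :
    ∀ L, 1 ≤ L → R L ≤ c * ∑ i ∈ range (Nat.clog 2 L), p ^ i := by
  intro L
  induction L using Nat.strong_induction_on with
  | _ L ih =>
    intro hL
    rcases hL.eq_or_lt with rfl | hL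
    · simpa using hone
    have hhalf := ih ((L + 1) / 2) (by omega) (by omega)
    rw [Nat.clog_two_eq_clog_two_succ_div_two_add_one hL, geom_sum_succ]
    calc R L ≤ c + p * R ((L + 1) / 2) := hrec L hL
      _ ≤ c + p * (c * ∑ i ∈ range (Nat.clog 2 ((L + 1) / 2)), p ^ i) := by gcongr
      _ = c * (p * ∑ i ∈ range (Nat.clog 2 ((L + 1) / 2)), p ^ i + 1) := by ring

theorem interactive_bisection_rate_bound_general (R : ℕ → ℝ)
    (hone : R 1 = 0)
    (hrec : ∀ L, 2 ≤ L → R L ≤ 3 + (1 / 2) * R ((L + 1) / 2)) :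
    ∀ L, 1 ≤ L →
      R L ≤ 6 - 6 * (1 / 2 : ℝ) ^ (Nat.clog 2 L) ∧ R L < 6 := by
  intro L hL
  have hgeom : 3 * ∑ i ∈ range (Nat.clog 2 L), (1 / 2 : ℝ) ^ i
      = 6 - 6 * (1 / 2 : ℝ) ^ (Nat.clog 2 L) := by
    rw [geom_sum_eq (by norm_num)]
    ring
  have hbound := hgeom ▸ le_mul_geom_sum_clog_of_le_add_mul (by norm_num) hone.le hrec L hL
  have hpos : (0 : ℝ) < 6 * (1 / 2 : ℝ) ^ (Nat.clog 2 L) := by positivity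
  exact ⟨hbound, by linarith⟩

/-- The bisection-based two-user interactive argmax scheme: if `R` is nonnegative with
`R 1 = 0` and `R L ≤ 3 + (1/2) R(⌈L/2⌉)` for `L ≥ 2`, then
`R L ≤ 6 − 6 (1/2)^{⌈log₂ L⌉} < 6` for all `L ≥ 1`. -/
theorem interactive_bisection_rate_bound (R : ℕ → ℝ)
    (hnonneg : ∀ L, 1 ≤ L → 0 ≤ R L)
    (hone : R 1 = 0)
    (hrec : ∀ L, 2 ≤ L → R L ≤ 3 + (1 / 2) * R ((L + 1) / 2)) :
    ∀ L, 1 ≤ L →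
      R L ≤ 6 - 6 * (1 / 2 : ℝ) ^ (Nat.clog 2 L) ∧ R L < 6 :=
  interactive_bisection_rate_bound_general R hone hrec
end
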